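/- A structure M for (Σ, Φ) is standard (interprets each inductive predicate as the least fixpoint of the operator for Φ) if and only if for every inductive predicate P and terms t⃗ and assignment ρ: M ⊨_ρ P(t⃗) holds exactly when M ⊨_ρ P^{(k)}(t⃗) holds for some k ∈ ℕ. -/

import Mathlib

/-! ### First-order logic with inductively defined predicates (FOL_ID) -/

/-- A first-order signature with ordinary and inductive predicate symbols. -/
structure Signature : Type 1 where
  Func : Type
  arF : Func → ℕ
  Pred : Type
  arP : Pred → ℕ
  IndPred : Type
  arI : IndPred → ℕ

/-- Terms over a signature. -/
inductive Tm (S : Signature) : Type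
  | var : ℕ → Tm S
  | func (f : S.Func) : (Fin (S.arF f) → Tm S) → Tm S

/-- Formulas of FOL_ID. -/
inductive Fm (S : Signature) : Type
  | fals : Fm S
  | eq : Tm S → Tm S → Fm S
  | pred (Q : S.Pred) : (Fin (S.arP Q) → Tm S) → Fm S
  | ind (P : S.IndPred) : (Fin (S.arI P) → Tm S) → Fm S
  | not : Fm S → Fm S
  | and : Fm S → Fm S → Fm S
  | or : Fm S → Fm S → Fm S
  | imp : Fm S → Fm S → Fm S
  | all : ℕ → Fm S → Fm S
  | ex : ℕ → Fm S → Fm S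

/-- A first-order structure for a signature. -/
structure Struc (S : Signature) : Type 1 where
  U : Type
  interpF (f : S.Func) : (Fin (S.arF f) → U) → U
  interpP (Q : S.Pred) : Set (Fin (S.arP Q) → U)
  interpI : Set ((P : S.IndPred) × (Fin (S.arI P) → U))

/-- Evaluation of terms. -/
def Tm.eval {S : Signature} (M : Struc S) (ρ : ℕ → M.U) : Tm S → M.U
  | .var n => ρ n
  | .func f ts => M.interpF f (fun i => (ts i).eval M ρ)

/-- Update of a variable assignment. -/
def update {α : Type} (ρ : ℕ → α) (n : ℕ) (a : α) : ℕ → α :=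
  fun m => if m = n then a else ρ m

/-- Tarskian satisfaction. -/
def Sat {S : Signature} (M : Struc S) (ρ : ℕ → M.U) : Fm S → Prop
  | .fals => False
  | .eq t u => t.eval M ρ = u.eval M ρ
  | .pred Q ts => (fun i => (ts i).eval M ρ) ∈ M.interpP Q
  | .ind P ts => ⟨P, fun i => (ts i).eval M ρ⟩ ∈ M.interpI
  | .not A => ¬ Sat M ρ A
  | .and A B => Sat M ρ A ∧ Sat M ρ B
  | .or A B => Sat M ρ A ∨ Sat M ρ B
  | .imp A B => Sat M ρ A → Sat M ρ B
  | .all n A => ∀ a : M.U, Sat M (update ρ n a) A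
  | .ex n A => ∃ a : M.U, Sat M (update ρ n a) A

/-- Free variables of a term. -/
def Tm.fv {S : Signature} : Tm S → Finset ℕ
  | .var n => {n}
  | .func _ ts => Finset.univ.biUnion (fun i => (ts i).fv)

/-- Free variables of a formula. -/
def Fm.fv {S : Signature} : Fm S → Finset ℕ
  | .fals => ∅
  | .eq t u => t.fv ∪ u.fv
  | .pred _ ts => Finset.univ.biUnion (fun i => (ts i).fv)
  | .ind _ ts => Finset.univ.biUnion (fun i => (ts i).fv)
  | .not A => A.fv
  | .and A B => A.fv ∪ B.fv
  | .or A B => A.fv ∪ B.fv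
  | .imp A B => A.fv ∪ B.fv
  | .all n A => A.fv.erase n
  | .ex n A => A.fv.erase n

/-- Simultaneous substitution on terms. -/
def Tm.subst {S : Signature} (σ : ℕ → Tm S) : Tm S → Tm S
  | .var n => σ n
  | .func f ts => .func f (fun i => (ts i).subst σ)

/-- Substitution of a (closed) term for a variable in a formula. -/
def Fm.substC {S : Signature} (x : ℕ) (t : Tm S) : Fm S → Fm S
  | .fals => .fals
  | .eq a b => .eq (a.subst (fun n => if n = x then t else .var n))
      (b.subst (fun n => if n = x then t else .var n))
  | .pred Q ts => .pred Q (fun i => (ts i).subst (fun n => if n = x then t else .var n))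
  | .ind P ts => .ind P (fun i => (ts i).subst (fun n => if n = x then t else .var n))
  | .not A => .not (A.substC x t)
  | .and A B => .and (A.substC x t) (B.substC x t)
  | .or A B => .or (A.substC x t) (B.substC x t)
  | .imp A B => .imp (A.substC x t) (B.substC x t)
  | .all n A => if n = x then .all n A else .all n (A.substC x t)
  | .ex n A => if n = x then .ex n A else .ex n (A.substC x t)

/-- A production rule for inductive predicates. -/
structure ProdRule (S : Signature) : Type where
  concl : S.IndPred
  conclArgs : Fin (S.arI concl) → Tm S
  ordPrems : List ((Q : S.Pred) × (Fin (S.arP Q) → Tm S))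
  indPrems : List ((P : S.IndPred) × (Fin (S.arI P) → Tm S))

/-- The monotone operator determined by a set of production rules over a structure. -/
def step {S : Signature} (M : Struc S) (Φ : List (ProdRule S))
    (X : Set ((P : S.IndPred) × (Fin (S.arI P) → M.U))) :
    Set ((P : S.IndPred) × (Fin (S.arI P) → M.U)) :=
  { v | ∃ r ∈ Φ, ∃ ρ : ℕ → M.U,
      (∀ q ∈ r.ordPrems, (fun i => (q.2 i).eval M ρ) ∈ M.interpP q.1) ∧
      (∀ p ∈ r.indPrems, ⟨p.1, fun i => (p.2 i).eval M ρ⟩ ∈ X) ∧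
      v = ⟨r.concl, fun i => (r.conclArgs i).eval M ρ⟩ }

theorem step_mono {S : Signature} (M : Struc S) (Φ : List (ProdRule S)) :
    Monotone (step M Φ) := by
  rintro X Y h v ⟨r, hr, ρ, hq, hp, hv⟩
  exact ⟨r, hr, ρ, hq, fun p hp' => h (hp p hp'), hv⟩

/-- The operator for the production rules, as an order homomorphism. -/
def stepHom {S : Signature} (M : Struc S) (Φ : List (ProdRule S)) :
    Set ((P : S.IndPred) × (Fin (S.arI P) → M.U)) →o
      Set ((P : S.IndPred) × (Fin (S.arI P) → M.U)) :=
  ⟨step M Φ, step_mono M Φ⟩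

/-- A structure is a standard model for `(S, Φ)` if it interprets the inductive
predicates by the least fixpoint of the operator for `Φ`. -/
def Standard {S : Signature} (M : Struc S) (Φ : List (ProdRule S)) : Prop :=
  M.interpI = OrderHom.lfp (stepHom M Φ)

/-- The variables occurring in a production rule. -/
def ProdRule.vars {S : Signature} (r : ProdRule S) : Finset ℕ :=
  (Finset.univ.biUnion fun i => (r.conclArgs i).fv) ∪
    (r.ordPrems.foldr (fun q s => s ∪ Finset.univ.biUnion fun i => (q.2 i).fv) ∅) ∪
    (r.indPrems.foldr (fun p s => s ∪ Finset.univ.biUnion fun i => (p.2 i).fv) ∅)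

def bigAnd {S : Signature} : List (Fm S) → Fm S
  | [] => .not .fals
  | A :: l => .and A (bigAnd l)

def bigOr {S : Signature} : List (Fm S) → Fm S
  | [] => .fals
  | A :: l => .or A (bigOr l)

def exList {S : Signature} : List ℕ → Fm S → Fm S
  | [], A => A
  | n :: l, A => .ex n (exList l A)

/-- The `k`-fold syntactic unfolding `P^{(k)}(t⃗)` of an inductive predicate:
`P^{(0)}(t⃗) ≡ ⊥` and `P^{(k+1)}(t⃗)` is the disjunction, over production rules with
conclusion `P t⃗₀`, of `∃y⃗ (t⃗ = t⃗₀ ∧ ⋀ Q_l u⃗_l ∧ ⋀ P_{j_p}^{(k)}(t⃗_p))`, with the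
rule variables `y⃗` renamed to be fresh for `t⃗`. -/
def unfold {S : Signature} [DecidableEq S.IndPred] (Φ : List (ProdRule S)) :
    ℕ → (P : S.IndPred) → (Fin (S.arI P) → Tm S) → Fm S
  | 0, _, _ => .fals
  | (k+1), P, ts =>
    bigOr (Φ.map fun r =>
      if h : r.concl = P then
        let N : ℕ := ((Finset.univ.biUnion fun i => (ts i).fv).sup id) + 1
        let σ : ℕ → Tm S := fun n => .var (n + N)
        exList ((r.vars.sort (· ≤ ·)).map (· + N))
          (.and (bigAnd ((List.finRange (S.arI P)).map fun i =>
              .eq (ts i) (((h ▸ r.conclArgs) i).subst σ)))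
            (.and (bigAnd (r.ordPrems.map fun q => .pred q.1 fun i => (q.2 i).subst σ))
              (bigAnd (r.indPrems.map fun p => unfold Φ k p.1 fun i => (p.2 i).subst σ))))
      else .fals)


/-!
The `k`-fold unfolding `P^{(k)}` defines, in any structure, exactly the `k`-th Kleene
approximant `φ^k(∅)`: renaming the rule variables apart from `t⃗` lets the existential
quantifier of a clause range over all instances of the rule. Since every rule has finitely
many premises, `φ` commutes with directed unions, so by Kleene's theorem
`lfp φ = ⋃ₖ φ^k(∅)`. Conversely, every tuple over a nonempty universe is the value of a
tuple of variables, so the characterisation for all terms and assignments determines `⟦P⟧`.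
-/

section Semantics

variable {S : Signature} (M : Struc S)

theorem Tm.eval_subst (ρ : ℕ → M.U) (σ : ℕ → Tm S) :
    ∀ t : Tm S, (t.subst σ).eval M ρ = t.eval M (fun n => (σ n).eval M ρ)
  | .var _ => rfl
  | .func f ts => congrArg (M.interpF f) (funext fun i => Tm.eval_subst ρ σ (ts i))

theorem Tm.eval_congr {ρ ρ' : ℕ → M.U} :
    ∀ t : Tm S, (∀ n ∈ t.fv, ρ n = ρ' n) → t.eval M ρ = t.eval M ρ'
  | .var n, h => h n (Finset.mem_singleton_self n)
  | .func f ts, h => congrArg (M.interpF f) <| funext fun i => Tm.eval_congr (ts i)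
      fun n hn => h n (Finset.mem_biUnion.mpr ⟨i, Finset.mem_univ i, hn⟩)

theorem sat_bigOr (ρ : ℕ → M.U) : ∀ l : List (Fm S), Sat M ρ (bigOr l) ↔ ∃ A ∈ l, Sat M ρ A
  | [] => by simp [bigOr, Sat]
  | A :: l => by simp [bigOr, Sat, sat_bigOr ρ l]

theorem sat_bigAnd (ρ : ℕ → M.U) : ∀ l : List (Fm S), Sat M ρ (bigAnd l) ↔ ∀ A ∈ l, Sat M ρ A
  | [] => by simp [bigAnd, Sat]
  | A :: l => by simp [bigAnd, Sat, sat_bigAnd ρ l]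

theorem sat_exList (A : Fm S) : ∀ (l : List ℕ) (ρ : ℕ → M.U),
    Sat M ρ (exList l A) ↔ ∃ ρ' : ℕ → M.U, (∀ n ∉ l, ρ' n = ρ n) ∧ Sat M ρ' A
  | [], ρ => ⟨fun h => ⟨ρ, fun _ _ => rfl, h⟩,
      fun ⟨ρ', h, hA⟩ => funext (fun n => h n List.not_mem_nil) ▸ hA⟩
  | n :: l, ρ => by
    simp only [exList, Sat, sat_exList A l, List.mem_cons, not_or]
    constructor
    · rintro ⟨a, ρ', h, hA⟩
      exact ⟨ρ', fun m ⟨hmn, hml⟩ => (h m hml).trans (if_neg hmn), hA⟩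
    · rintro ⟨ρ', h, hA⟩
      refine ⟨ρ' n, ρ', fun m hml => ?_, hA⟩
      by_cases hmn : m = n
      · subst hmn; exact (if_pos rfl).symm
      · exact (h m ⟨hmn, hml⟩).trans (if_neg hmn).symm

theorem lt_sup_fv_add_one {ι : Type*} [Fintype ι] (ts : ι → Tm S) (i : ι) {n : ℕ}
    (hn : n ∈ (ts i).fv) : n < (Finset.univ.biUnion fun i => (ts i).fv).sup id + 1 :=
  Nat.lt_succ_of_le (Finset.le_sup (f := id) (Finset.mem_biUnion.mpr ⟨i, Finset.mem_univ i, hn⟩))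

end Semantics

theorem mem_foldr_union {α : Type*} (g : α → Finset ℕ) (n : ℕ) :
    ∀ l : List α, n ∈ l.foldr (fun q s => s ∪ g q) ∅ ↔ ∃ q ∈ l, n ∈ g q
  | [] => by simp
  | a :: l => by simp [mem_foldr_union g n l, or_comm]

namespace ProdRule

variable {S : Signature}

theorem fv_conclArgs_subset_vars (r : ProdRule S) (i : Fin (S.arI r.concl)) :
    (r.conclArgs i).fv ⊆ r.vars := fun n hn => by
  simp only [vars, Finset.mem_union, Finset.mem_biUnion]
  exact Or.inl (Or.inl ⟨i, Finset.mem_univ i, hn⟩)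

theorem fv_ordPrems_subset_vars (r : ProdRule S) {q : (Q : S.Pred) × (Fin (S.arP Q) → Tm S)}
    (hq : q ∈ r.ordPrems) (i : Fin (S.arP q.1)) : (q.2 i).fv ⊆ r.vars := fun n hn => by
  simp only [vars, Finset.mem_union, mem_foldr_union, Finset.mem_biUnion]
  exact Or.inl (Or.inr ⟨q, hq, i, Finset.mem_univ i, hn⟩)

theorem fv_indPrems_subset_vars (r : ProdRule S)
    {p : (P : S.IndPred) × (Fin (S.arI P) → Tm S)} (hp : p ∈ r.indPrems)
    (i : Fin (S.arI p.1)) : (p.2 i).fv ⊆ r.vars := fun n hn => by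
  simp only [vars, Finset.mem_union, mem_foldr_union, Finset.mem_biUnion]
  exact Or.inr ⟨p, hp, i, Finset.mem_univ i, hn⟩

/-- The matrix `t⃗ = t⃗₀ ∧ ⋀ Q_l u⃗_l ∧ ⋀ F_{j_p}(t⃗_p)` of the clause of `r` in `P^{(k+1)}(t⃗)`
(with `F = P^{(k)}`), the rule variables shifted by `N`. -/
def unfoldMatrix (r : ProdRule S) (F : (P : S.IndPred) → (Fin (S.arI P) → Tm S) → Fm S)
    (N : ℕ) (ts : Fin (S.arI r.concl) → Tm S) : Fm S :=
  .and (bigAnd ((List.finRange (S.arI r.concl)).map fun i =>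
      .eq (ts i) ((r.conclArgs i).subst fun n => .var (n + N))))
    (.and (bigAnd (r.ordPrems.map fun q => .pred q.1 fun i => (q.2 i).subst fun n => .var (n + N)))
      (bigAnd (r.indPrems.map fun p => F p.1 fun i => (p.2 i).subst fun n => .var (n + N))))

def unfoldClause (r : ProdRule S) (F : (P : S.IndPred) → (Fin (S.arI P) → Tm S) → Fm S)
    (N : ℕ) (ts : Fin (S.arI r.concl) → Tm S) : Fm S :=
  exList ((r.vars.sort (· ≤ ·)).map (· + N)) (r.unfoldMatrix F N ts)

def Derives (r : ProdRule S) (M : Struc S) (X : Set ((P : S.IndPred) × (Fin (S.arI P) → M.U)))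
    (a : Fin (S.arI r.concl) → M.U) (ρ₀ : ℕ → M.U) : Prop :=
  (∀ q ∈ r.ordPrems, (fun i => (q.2 i).eval M ρ₀) ∈ M.interpP q.1) ∧
    (∀ p ∈ r.indPrems, ⟨p.1, fun i => (p.2 i).eval M ρ₀⟩ ∈ X) ∧
    a = fun i => (r.conclArgs i).eval M ρ₀

variable (M : Struc S) {X : Set ((P : S.IndPred) × (Fin (S.arI P) → M.U))}
  {F : (P : S.IndPred) → (Fin (S.arI P) → Tm S) → Fm S}

theorem derives_congr (r : ProdRule S) (a : Fin (S.arI r.concl) → M.U) {ρ₀ ρ₁ : ℕ → M.U}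
    (h : ∀ n ∈ r.vars, ρ₀ n = ρ₁ n) : r.Derives M X a ρ₀ ↔ r.Derives M X a ρ₁ := by
  have hu : ∀ u : Tm S, u.fv ⊆ r.vars → u.eval M ρ₀ = u.eval M ρ₁ :=
    fun u hu => u.eval_congr M fun n hn => h n (hu hn)
  unfold Derives
  refine and_congr (forall₂_congr fun q hq => ?_) (and_congr (forall₂_congr fun p hp => ?_) ?_)
  · rw [funext fun i => hu _ (r.fv_ordPrems_subset_vars hq i)]
  · rw [funext fun i => hu _ (r.fv_indPrems_subset_vars hp i)]
  · rw [funext fun i => hu _ (r.fv_conclArgs_subset_vars i)]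

theorem sat_unfoldMatrix_iff
    (hF : ∀ P ts ρ, Sat M ρ (F P ts) ↔ ⟨P, fun i => (ts i).eval M ρ⟩ ∈ X)
    (r : ProdRule S) (N : ℕ) (ts : Fin (S.arI r.concl) → Tm S) (ρ : ℕ → M.U) :
    Sat M ρ (r.unfoldMatrix F N ts) ↔
      r.Derives M X (fun i => (ts i).eval M ρ) fun n => ρ (n + N) := by
  simp only [unfoldMatrix, Derives, Sat, sat_bigAnd, List.forall_mem_map, hF, Tm.eval_subst,
    Tm.eval, List.mem_finRange, true_implies, funext_iff]
  tauto

theorem sat_unfoldClause_iff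
    (hF : ∀ P ts ρ, Sat M ρ (F P ts) ↔ ⟨P, fun i => (ts i).eval M ρ⟩ ∈ X)
    (r : ProdRule S) (ts : Fin (S.arI r.concl) → Tm S) {N : ℕ}
    (hN : ∀ i, ∀ n ∈ (ts i).fv, n < N) (ρ : ℕ → M.U) :
    Sat M ρ (r.unfoldClause F N ts) ↔ ∃ ρ₀, r.Derives M X (fun i => (ts i).eval M ρ) ρ₀ := by
  set L := (r.vars.sort (· ≤ ·)).map (· + N)
  have hts : ∀ ρ' : ℕ → M.U, (∀ n ∉ L, ρ' n = ρ n) →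
      (fun i => (ts i).eval M ρ') = fun i => (ts i).eval M ρ := by
    refine fun ρ' hρ' => funext fun i => (ts i).eval_congr M fun n hn => hρ' n fun hnL => ?_
    obtain ⟨m, -, rfl⟩ := List.mem_map.mp hnL
    exact absurd (hN i _ hn) (by omega)
  rw [unfoldClause, sat_exList]
  constructor
  · rintro ⟨ρ', hρ', hmatrix⟩
    rw [sat_unfoldMatrix_iff M hF, hts ρ' hρ'] at hmatrix
    exact ⟨_, hmatrix⟩
  · rintro ⟨ρ₀, hρ₀⟩
    refine ⟨fun m => if m ∈ L then ρ₀ (m - N) else ρ m, fun n hn => if_neg hn, ?_⟩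
    rw [sat_unfoldMatrix_iff M hF, hts _ fun n hn => if_neg hn]
    refine (derives_congr M r _ fun n hn => ?_).mpr hρ₀
    have hnL : n + N ∈ L := List.mem_map.mpr ⟨n, (Finset.mem_sort _).mpr hn, rfl⟩
    simp only [hnL, if_true, Nat.add_sub_cancel]

end ProdRule

section Unfolding

variable {S : Signature} [DecidableEq S.IndPred] (Φ : List (ProdRule S)) (M : Struc S)

theorem sat_unfold_succ_iff {X : Set ((P : S.IndPred) × (Fin (S.arI P) → M.U))} {k : ℕ}
    (hk : ∀ P ts ρ, Sat M ρ (unfold Φ k P ts) ↔ ⟨P, fun i => (ts i).eval M ρ⟩ ∈ X)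
    (P : S.IndPred) (ts : Fin (S.arI P) → Tm S) (ρ : ℕ → M.U) :
    Sat M ρ (unfold Φ (k + 1) P ts) ↔ ⟨P, fun i => (ts i).eval M ρ⟩ ∈ step M Φ X := by
  rw [unfold, sat_bigOr]
  simp only [List.mem_map, exists_exists_and_eq_and]
  refine exists_congr fun r => and_congr_right fun _ => ?_
  by_cases h : r.concl = P
  · subst h
    rw [dif_pos rfl]
    refine (r.sat_unfoldClause_iff M hk ts (fun i _ => lt_sup_fv_add_one ts i) ρ).trans ?_
    simp only [ProdRule.Derives, Sigma.mk.inj_iff, heq_eq_eq, true_and]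
  · rw [dif_neg h]
    simp only [Sat, false_iff, not_exists, not_and]
    exact fun _ _ _ hv => h (congrArg Sigma.fst hv).symm

theorem sat_unfold_iff_mem_iterate (k : ℕ) (P : S.IndPred) (ts : Fin (S.arI P) → Tm S)
    (ρ : ℕ → M.U) :
    Sat M ρ (unfold Φ k P ts) ↔ ⟨P, fun i => (ts i).eval M ρ⟩ ∈ (step M Φ)^[k] ∅ := by
  induction k generalizing P ts ρ with
  | zero => exact iff_of_false id id
  | succ k ih =>
    rw [Function.iterate_succ_apply']
    exact sat_unfold_succ_iff Φ M ih P ts ρ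

end Unfolding

section Kleene

open OmegaCompletePartialOrder

variable {S : Signature} (M : Struc S) (Φ : List (ProdRule S))

theorem step_iUnion {ι : Type*} [Nonempty ι]
    {X : ι → Set ((P : S.IndPred) × (Fin (S.arI P) → M.U))} (hX : Directed (· ⊆ ·) X) :
    step M Φ (⋃ i, X i) = ⋃ i, step M Φ (X i) := by
  refine (Set.iUnion_subset fun i => step_mono M Φ (Set.subset_iUnion X i)).antisymm' ?_
  rintro v ⟨r, hr, ρ, hq, hp, rfl⟩
  classical
  let premises : Finset ((P : S.IndPred) × (Fin (S.arI P) → M.U)) :=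
    (r.indPrems.map fun p => ⟨p.1, fun j => (p.2 j).eval M ρ⟩).toFinset
  obtain ⟨i, hi⟩ := hX.exists_mem_subset_of_finset_subset_biUnion (s := premises) fun v hv => by
    obtain ⟨p, hp', rfl⟩ := List.mem_map.mp (List.mem_toFinset.mp hv)
    exact hp p hp'
  exact Set.mem_iUnion.mpr ⟨i, r, hr, ρ, hq,
    fun p hp' => hi (List.mem_toFinset.mpr (List.mem_map.mpr ⟨p, hp', rfl⟩)), rfl⟩

theorem ωScottContinuous_stepHom : ωScottContinuous (stepHom M Φ) := by
  refine ωScottContinuous.of_map_ωSup_of_orderHom fun c => ?_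
  rw [← ωSup_eq_of_isLUB isLUB_iSup, ← ωSup_eq_of_isLUB isLUB_iSup]
  exact step_iUnion M Φ c.directed

theorem lfp_stepHom_eq_iUnion :
    OrderHom.lfp (stepHom M Φ) = ⋃ k : ℕ, (step M Φ)^[k] ∅ :=
  fixedPoints.lfp_eq_sSup_iterate _ (ωScottContinuous_stepHom M Φ)

end Kleene

/-- a structure `M` is standard (interprets the inductive predicates by
the least fixpoint of the operator for `Φ`) iff for every inductive predicate `P`,
terms `t⃗` and assignment `ρ`, `M ⊨_ρ P(t⃗)` holds exactly when `M ⊨_ρ P^{(k)}(t⃗)`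
holds for some `k ∈ ℕ`. -/
theorem stmt3 {S : Signature} [DecidableEq S.IndPred] (Φ : List (ProdRule S))
    (M : Struc S) [Nonempty M.U] :
    Standard M Φ ↔
      ∀ (P : S.IndPred) (ts : Fin (S.arI P) → Tm S) (ρ : ℕ → M.U),
        Sat M ρ (.ind P ts) ↔ ∃ k : ℕ, Sat M ρ (unfold Φ k P ts) := by
  have hunfold : ∀ P ts (ρ : ℕ → M.U), (∃ k, Sat M ρ (unfold Φ k P ts)) ↔
      ⟨P, fun i => (ts i).eval M ρ⟩ ∈ OrderHom.lfp (stepHom M Φ) := by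
    intro P ts ρ
    simp only [lfp_stepHom_eq_iUnion, Set.mem_iUnion, sat_unfold_iff_mem_iterate]
  simp only [hunfold]
  constructor
  · intro hstd P ts ρ
    rw [← hstd]
    rfl
  · intro h
    ext ⟨P, a⟩
    obtain ⟨ρ, hρ⟩ : ∃ ρ : ℕ → M.U, (fun i : Fin (S.arI P) => ρ i) = a :=
      ⟨fun n => if h : n < S.arI P then a ⟨n, h⟩ else Classical.arbitrary M.U,
        funext fun i => dif_pos i.isLt⟩
    simpa only [Sat, Tm.eval, hρ] using h P (fun i => .var i) ρ
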